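/- arXiv:2007.07703 — 7 statements merged into one kernel-verified Lean document; each statement's English description precedes it below -/
import Mathlib

section
/- A likelihood appraisal λ on a field of sets is (finitely) additive if and only if it is both totally monotone and symmetric (i.e., λ(Aᶜ) = 1 − λ(A) for all A in the field). -/
/-!
Additivity on a field of sets makes `λ` modular, `λ (A ∪ B) + λ (A ∩ B) = λ A + λ B`, and a
modular function satisfies inclusion–exclusion with equality; this gives total monotonicity,
and symmetry is additivity on `A` and `Aᶜ`. Conversely, total monotonicity for two sets is
supermodularity, so `λ (A ∪ B) ≥ λ A + λ B` for disjoint `A`, `B`. Supermodularity applied to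
`Aᶜ` and `Bᶜ`, whose union is everything and whose intersection is `(A ∪ B)ᶜ`, becomes the
reverse inequality once symmetry rewrites every term.
-/

open Finset MeasureTheory

namespace MeasureTheory.IsSetRing

variable {Ω : Type*} {C : Set (Set Ω)} {μ : Set Ω → ℝ}

theorem union_add_inter_of_additive (hC : IsSetRing C)
    (hadd : ∀ A ∈ C, ∀ B ∈ C, A ∩ B = ∅ → μ (A ∪ B) = μ A + μ B) :
    ∀ A ∈ C, ∀ B ∈ C, μ (A ∪ B) + μ (A ∩ B) = μ A + μ B := by
  intro A hA B hB
  have hBA : B \ A ∈ C := hC.sdiff_mem hB hA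
  have hunion := hadd A hA (B \ A) hBA (Set.inter_sdiff_self _ _)
  have hsplit := hadd (B ∩ A) (hC.inter_mem hB hA) (B \ A) hBA
    (by rw [Set.inter_assoc, Set.inter_sdiff_self, Set.inter_empty])
  rw [Set.union_sdiff_self] at hunion
  rw [Set.inter_union_sdiff, Set.inter_comm] at hsplit
  linarith

theorem sum_powerset_inter_biInter_of_modular {ι : Type*} [DecidableEq ι] (hC : IsSetRing C)
    (h0 : μ ∅ = 0) (hmod : ∀ A ∈ C, ∀ B ∈ C, μ (A ∪ B) + μ (A ∩ B) = μ A + μ B)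
    (s : Finset ι) {A : ι → Set Ω} (hA : ∀ i ∈ s, A i ∈ C) {B : Set Ω} (hB : B ∈ C) :
    ∑ I ∈ s.powerset, (-1 : ℝ) ^ #I * μ (B ∩ ⋂ i ∈ I, A i) = μ B - μ (B ∩ ⋃ i ∈ s, A i) := by
  induction s using Finset.induction generalizing B with
  | empty => simp [h0]
  | @insert a s ha ih =>
    have hAa := hA a (mem_insert_self a s)
    have hAs : ∀ i ∈ s, A i ∈ C := fun i hi => hA i (mem_insert_of_mem hi)
    have hBU : B ∩ ⋃ i ∈ s, A i ∈ C := hC.inter_mem hB (hC.biUnion_mem s hAs)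
    have hterm : ∀ I ∈ s.powerset, (-1 : ℝ) ^ #(insert a I) * μ (B ∩ ⋂ i ∈ insert a I, A i)
        = -((-1 : ℝ) ^ #I * μ ((B ∩ A a) ∩ ⋂ i ∈ I, A i)) := by
      intro I hI
      rw [card_insert_of_notMem fun h => ha (mem_powerset.1 hI h), set_biInter_insert,
        pow_succ, Set.inter_assoc]
      ring
    rw [sum_powerset_insert ha, sum_congr rfl hterm, sum_neg_distrib, ih hAs hB,
      ih hAs (hC.inter_mem hB hAa), set_biUnion_insert, Set.inter_union_distrib_left]
    have hmodB := hmod _ (hC.inter_mem hB hAa) _ hBU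
    rw [show B ∩ A a ∩ (B ∩ ⋃ i ∈ s, A i) = B ∩ A a ∩ ⋃ i ∈ s, A i by
      rw [Set.inter_inter_inter_comm, Set.inter_self, Set.inter_assoc]] at hmodB
    linarith

theorem biUnion_eq_sum_powerset_of_modular {ι : Type*} [DecidableEq ι] (hC : IsSetRing C)
    (h0 : μ ∅ = 0) (hmod : ∀ A ∈ C, ∀ B ∈ C, μ (A ∪ B) + μ (A ∩ B) = μ A + μ B)
    (s : Finset ι) {A : ι → Set Ω} (hA : ∀ i ∈ s, A i ∈ C) :
    μ (⋃ i ∈ s, A i) = ∑ I ∈ s.powerset.erase ∅, (-1 : ℝ) ^ (#I + 1) * μ (⋂ i ∈ I, A i) := by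
  set U := ⋃ i ∈ s, A i
  -- Inclusion–exclusion relative to `U` itself: the right-hand side vanishes, and `U` can be
  -- dropped from every term with `I ≠ ∅`.
  have hie := hC.sum_powerset_inter_biInter_of_modular h0 hmod s hA (hC.biUnion_mem s hA)
  rw [Set.inter_self, sub_self, ← add_sum_erase _ _ (empty_mem_powerset s)] at hie
  have hterm : ∀ I ∈ s.powerset.erase ∅, (-1 : ℝ) ^ #I * μ (U ∩ ⋂ i ∈ I, A i)
      = -((-1 : ℝ) ^ (#I + 1) * μ (⋂ i ∈ I, A i)) := by
    intro I hI
    obtain ⟨hIne, hIs⟩ := mem_erase.1 hI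
    obtain ⟨j, hj⟩ := nonempty_of_ne_empty hIne
    have hsub : ⋂ i ∈ I, A i ⊆ U :=
      (Set.biInter_subset_of_mem hj).trans (Set.subset_biUnion_of_mem (mem_powerset.1 hIs hj))
    rw [Set.inter_eq_right.2 hsub, pow_succ]
    ring
  rw [sum_congr rfl hterm, sum_neg_distrib] at hie
  simp only [card_empty, pow_zero, one_mul, notMem_empty, Set.iInter_of_empty, Set.iInter_univ,
    Set.inter_univ] at hie
  linarith

end MeasureTheory.IsSetRing

namespace MeasureTheory.IsSetAlgebra

theorem union_eq_add_of_supermodular {Ω : Type*} {C : Set (Set Ω)} {μ : Set Ω → ℝ}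
    (hC : IsSetAlgebra C) (h0 : μ ∅ = 0) (h1 : μ Set.univ = 1)
    (hsup : ∀ A ∈ C, ∀ B ∈ C, μ A + μ B - μ (A ∩ B) ≤ μ (A ∪ B))
    (hcompl : ∀ A ∈ C, μ Aᶜ = 1 - μ A) {A B : Set Ω} (hA : A ∈ C) (hB : B ∈ C)
    (hAB : A ∩ B = ∅) : μ (A ∪ B) = μ A + μ B := by
  have hle := hsup A hA B hB
  have hge := hsup Aᶜ (hC.compl_mem hA) Bᶜ (hC.compl_mem hB)
  rw [hAB, h0] at hle
  rw [← Set.compl_inter, hAB, Set.compl_empty, h1, ← Set.compl_union, hcompl A hA, hcompl B hB,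
    hcompl _ (hC.union_mem hA hB)] at hge
  linarith

end MeasureTheory.IsSetAlgebra

theorem sum_powerset_erase_empty_pair {Ω : Type*} (μ : Set Ω → ℝ) (A B : Set Ω) :
    ∑ I ∈ (univ : Finset (Fin 2)).powerset.erase ∅, (-1 : ℝ) ^ (#I + 1) * μ (⋂ i ∈ I, ![A, B] i)
      = μ A + μ B - μ (A ∩ B) := by
  rw [show (univ : Finset (Fin 2)).powerset.erase ∅ = {{0}, {1}, {0, 1}} by decide,
    sum_insert (by decide), sum_insert (by decide), sum_singleton]
  simp only [set_biInter_singleton, set_biInter_insert, Matrix.cons_val_zero,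
    Matrix.cons_val_one]
  norm_num
  ring

theorem stmt_1_general {Ω : Type} (C : Set (Set Ω))
    (hempty : ∅ ∈ C) (hcompl : ∀ A ∈ C, Aᶜ ∈ C)
    (hunion : ∀ A ∈ C, ∀ B ∈ C, A ∪ B ∈ C)
    (lam : Set Ω → ℝ)
    (h0 : lam ∅ = 0) (h1 : lam Set.univ = 1) :
    (∀ A ∈ C, ∀ B ∈ C, A ∩ B = ∅ → lam (A ∪ B) = lam A + lam B) ↔
      ((∀ (n : ℕ) (A : Fin n → Set Ω), (∀ i, A i ∈ C) →
        lam (⋃ i, A i) ≥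
          ∑ I ∈ (Finset.univ.powerset.erase (∅ : Finset (Fin n))),
            (-1 : ℝ) ^ (I.card + 1) * lam (⋂ i ∈ I, A i)) ∧
       (∀ A ∈ C, lam Aᶜ = 1 - lam A)) := by
  have hC : IsSetAlgebra C := ⟨hempty, fun A => hcompl A, fun A B hA => hunion A hA B⟩
  constructor
  · intro hadd
    have hmod := hC.isSetRing.union_add_inter_of_additive hadd
    refine ⟨fun n A hA => ?_, fun A hA => ?_⟩
    · have hie := hC.isSetRing.biUnion_eq_sum_powerset_of_modular h0 hmod univ fun i _ => hA i
      simp only [mem_univ, Set.iUnion_true] at hie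
      exact hie.ge
    · have hsplit := hadd A hA Aᶜ (hcompl A hA) (Set.inter_compl_self A)
      rw [Set.union_compl_self, h1] at hsplit
      linarith
  · rintro ⟨hTM, hsymm⟩
    refine fun A hA B hB => hC.union_eq_add_of_supermodular h0 h1 (fun X hX Y hY => ?_) hsymm hA hB
    have hpair := hTM 2 ![X, Y] (Fin.forall_fin_two.2 ⟨hX, hY⟩)
    rwa [sum_powerset_erase_empty_pair,
      show ⋃ i, ![X, Y] i = X ∪ Y by ext; simp [Fin.exists_fin_two]] at hpair

/-- A likelihood appraisal on a field of sets is finitely additive iff it is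
totally monotone and symmetric. -/
theorem stmt_1 {Ω : Type} (C : Set (Set Ω))
    (hempty : ∅ ∈ C) (hcompl : ∀ A ∈ C, Aᶜ ∈ C)
    (hunion : ∀ A ∈ C, ∀ B ∈ C, A ∪ B ∈ C)
    (lam : Set Ω → ℝ)
    (h0 : lam ∅ = 0) (h1 : lam Set.univ = 1)
    (hrange : ∀ A ∈ C, lam A ∈ Set.Icc (0:ℝ) 1) :
    (∀ A ∈ C, ∀ B ∈ C, A ∩ B = ∅ → lam (A ∪ B) = lam A + lam B) ↔
      ((∀ (n : ℕ) (A : Fin n → Set Ω), (∀ i, A i ∈ C) →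
        lam (⋃ i, A i) ≥
          ∑ I ∈ (Finset.univ.powerset.erase (∅ : Finset (Fin n))),
            (-1 : ℝ) ^ (I.card + 1) * lam (⋂ i ∈ I, A i)) ∧
       (∀ A ∈ C, lam Aᶜ = 1 - lam A)) :=
  stmt_1_general C hempty hcompl hunion lam h0 h1
end

section
/- For any monotone capacity λ on the power set of a finite set Ω and any sound truth valuation t: L → 2^Ω, there exists a retaining model with additive measure: letting Ω' = [0,1] with Lebesgue measure μ and t'(φ) = [0, λ(t(φ))] (and ∅ if λ(t(φ))=0), the map t' is a monotone truth valuation and μ(t'(φ)) = λ(t(φ)) for all φ ∈ L. -/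
inductive Form (α : Type) : Type where
  | atom : α → Form α
  | tru : Form α
  | fls : Form α
  | neg : Form α → Form α
  | conj : Form α → Form α → Form α
  | disj : Form α → Form α → Form α

def Form.eval {α : Type} (v : α → Prop) : Form α → Prop
  | .atom a => v a
  | .tru => True
  | .fls => False
  | .neg φ => ¬ φ.eval v
  | .conj φ ψ => φ.eval v ∧ ψ.eval v
  | .disj φ ψ => φ.eval v ∨ ψ.eval v

def Entails {α : Type} (φ ψ : Form α) : Prop := ∀ v : α → Prop, φ.eval v → ψ.eval v

def FEquiv {α : Type} (φ ψ : Form α) : Prop := Entails φ ψ ∧ Entails ψ φ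

def Sound {α Ω : Type} (t : Form α → Set Ω) : Prop :=
  t .tru = Set.univ ∧ t .fls = ∅ ∧
  (∀ φ, t (.neg φ) = (t φ)ᶜ) ∧
  (∀ φ ψ, t (.conj φ ψ) = t φ ∩ t ψ) ∧
  (∀ φ ψ, t (.disj φ ψ) = t φ ∪ t ψ) ∧
  (∀ φ ψ, FEquiv φ ψ → t φ = t ψ)

open scoped Classical

theorem Sound.subset_of_entails {α Ω : Type} {t : Form α → Set Ω} (ht : Sound t)
    {φ ψ : Form α} (h : Entails φ ψ) : t φ ⊆ t ψ := by
  obtain ⟨-, -, -, hconj, -, hequiv⟩ := ht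
  have hconj_equiv : FEquiv (.conj φ ψ) φ := ⟨fun _ hv => hv.1, fun v hv => ⟨hv, h v hv⟩⟩
  rw [← hequiv _ _ hconj_equiv, hconj]
  exact Set.inter_subset_right

noncomputable def initialSegment (x : ℝ) : Set ℝ := if x = 0 then ∅ else Set.Icc 0 x

theorem initialSegment_monotone : Monotone initialSegment := by
  intro x y hxy
  by_cases hx : x = 0
  · simp [initialSegment, hx]
  by_cases hy : y = 0
  · have hx_neg : x < 0 := lt_of_le_of_ne (hy ▸ hxy) hx
    simp [initialSegment, hx, Set.Icc_eq_empty_of_lt hx_neg]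
  simp only [initialSegment, hx, hy, if_false]
  exact Set.Icc_subset_Icc le_rfl hxy

theorem volume_initialSegment (x : ℝ) :
    MeasureTheory.volume (initialSegment x) = ENNReal.ofReal x := by
  unfold initialSegment
  split_ifs with hx
  · simp [hx]
  · simp [Real.volume_Icc]

theorem stmt_6_general {α Ω : Type}
    (lam : Set Ω → ℝ)
    (hmono : ∀ A B : Set Ω, A ⊆ B → lam A ≤ lam B)
    (t : Form α → Set Ω) (ht : Sound t)
    (t' : Form α → Set ℝ)
    (ht' : ∀ φ, t' φ = if lam (t φ) = 0 then (∅ : Set ℝ) else Set.Icc 0 (lam (t φ))) :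
    (∀ φ ψ, Entails φ ψ → t' φ ⊆ t' ψ) ∧
    (∀ φ, MeasureTheory.volume (t' φ) = ENNReal.ofReal (lam (t φ))) := by
  have ht'_eq : ∀ φ, t' φ = initialSegment (lam (t φ)) := ht'
  refine ⟨fun φ ψ h => ?_, fun φ => ?_⟩
  · rw [ht'_eq, ht'_eq]
    exact initialSegment_monotone (hmono _ _ (ht.subset_of_entails h))
  · rw [ht'_eq, volume_initialSegment]

/-- A monotone capacity composed with a sound truth valuation admits a
representation on [0,1] with Lebesgue measure via initial segments. -/
theorem stmt_6 {α Ω : Type} [Fintype Ω]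
    (lam : Set Ω → ℝ)
    (h0 : lam ∅ = 0) (h1 : lam Set.univ = 1)
    (hmono : ∀ A B : Set Ω, A ⊆ B → lam A ≤ lam B)
    (t : Form α → Set Ω) (ht : Sound t)
    (t' : Form α → Set ℝ)
    (ht' : ∀ φ, t' φ = if lam (t φ) = 0 then (∅ : Set ℝ) else Set.Icc 0 (lam (t φ))) :
    (∀ φ ψ, Entails φ ψ → t' φ ⊆ t' ψ) ∧
    (∀ φ, MeasureTheory.volume (t' φ) = ENNReal.ofReal (lam (t φ))) :=
  stmt_6_general lam hmono t ht t' ht'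
end

section
/- (Wald–Pearce Lemma) Let Ω be a finite set and A a finite set of functions x: Ω → ℝ. Then x ∈ A maximizes the expectation ∫ x dλ over A for some (finitely additive) probability measure λ on Ω if and only if x is not strictly pointwise dominated by any convex combination of elements of A (i.e., there is no y in the convex hull of A with y(ω) > x(ω) for all ω ∈ Ω). -/
/-!
A best response to `λ` maximizes the linear functional `y ↦ λ ⬝ᵥ y` on `A`, hence on its convex
hull, while a strictly dominating `y` would increase it because some weight `λ ω` is positive.
Conversely, if nothing in the hull strictly dominates `x`, the convex set `conv A - x` misses the
open positive orthant. A functional separating the two is bounded on the orthant, a cone, so its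
coefficients all have the same sign, and normalizing them gives `λ`.
-/

open Set Matrix

variable {Ω : Type*} [Fintype Ω]

theorem dotProduct_le_of_mem_convexHull {A : Set (Ω → ℝ)} {lam y : Ω → ℝ} {b : ℝ}
    (hA : ∀ z ∈ A, lam ⬝ᵥ z ≤ b) (hy : y ∈ convexHull ℝ A) : lam ⬝ᵥ y ≤ b :=
  convexHull_min hA (convex_halfSpace_le (dotProductBilin ℝ ℝ lam).isLinear b) hy

theorem dotProduct_lt_dotProduct_of_mem_stdSimplex {lam x y : Ω → ℝ}
    (hlam : lam ∈ stdSimplex ℝ Ω) (hxy : ∀ ω, x ω < y ω) : lam ⬝ᵥ x < lam ⬝ᵥ y := by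
  obtain ⟨ω₀, -, hω₀⟩ : ∃ ω ∈ Finset.univ, 0 < lam ω :=
    Finset.exists_lt_of_sum_lt (by simp [hlam.2])
  exact Finset.sum_lt_sum (fun ω _ => mul_le_mul_of_nonneg_left (hxy ω).le (hlam.1 ω))
    ⟨ω₀, Finset.mem_univ _, mul_lt_mul_of_pos_left (hxy ω₀) hω₀⟩

theorem not_exists_strictly_dominating_of_dotProduct_le {A : Set (Ω → ℝ)} {lam x : Ω → ℝ}
    (hlam : lam ∈ stdSimplex ℝ Ω) (hmax : ∀ y ∈ A, lam ⬝ᵥ y ≤ lam ⬝ᵥ x) :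
    ¬ ∃ y ∈ convexHull ℝ A, ∀ ω, x ω < y ω := fun ⟨_, hy, hxy⟩ =>
  (dotProduct_le_of_mem_convexHull hmax hy).not_gt
    (dotProduct_lt_dotProduct_of_mem_stdSimplex hlam hxy)

theorem LinearMap.apply_eq_dotProduct [DecidableEq Ω] (f : (Ω → ℝ) →ₗ[ℝ] ℝ) (v : Ω → ℝ) :
    f v = (fun ω => f (Pi.single ω 1)) ⬝ᵥ v := by
  rw [f.pi_apply_eq_sum_univ v, dotProduct_comm]
  refine Finset.sum_congr rfl fun ω _ => ?_
  congr 2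
  ext j
  simp [Pi.single_apply, eq_comm]

theorem nonpos_of_forall_mul_le {a b : ℝ} (h : ∀ t, 0 < t → t * a ≤ b) : a ≤ 0 := by
  by_contra! ha
  have := h ((|b| + 1) / a) (by positivity)
  rw [div_mul_cancel₀ _ ha.ne'] at this
  linarith [le_abs_self b]

theorem inv_sum_smul_mem_stdSimplex {c : Ω → ℝ} (hc : 0 ≤ c) (hc0 : c ≠ 0) :
    (∑ ω, c ω)⁻¹ • c ∈ stdSimplex ℝ Ω := by
  obtain ⟨ω₀, hω₀⟩ := Function.ne_iff.1 hc0
  have hsum : 0 < ∑ ω, c ω :=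
    Finset.sum_pos' (fun ω _ => hc ω) ⟨ω₀, Finset.mem_univ _, (hc ω₀).lt_of_ne' hω₀⟩
  exact ⟨fun ω => mul_nonneg (inv_nonneg.2 hsum.le) (hc ω), by
    simp [← Finset.mul_sum, hsum.ne']⟩

theorem exists_mem_stdSimplex_dotProduct_nonpos {K : Set (Ω → ℝ)} (hKconv : Convex ℝ K)
    (hKne : K.Nonempty) (hK : ¬ ∃ k ∈ K, ∀ ω, 0 < k ω) :
    ∃ lam ∈ stdSimplex ℝ Ω, ∀ k ∈ K, lam ⬝ᵥ k ≤ 0 := by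
  classical
  set P : Set (Ω → ℝ) := univ.pi fun _ => Ioi 0
  have hPK : Disjoint P K :=
    disjoint_left.2 fun p hp hpK => hK ⟨p, hpK, fun ω => hp ω (mem_univ ω)⟩
  obtain ⟨f, u, hfP, hfK⟩ := geometric_hahn_banach_open (convex_pi fun _ _ => convex_Ioi 0)
    (isOpen_set_pi finite_univ fun _ _ => isOpen_Ioi) hKconv hPK
  have hfQ : ∀ q : Ω → ℝ, 0 ≤ q → f q ≤ u := by
    have : closure P ⊆ {v | f v ≤ u} :=
      closure_minimal (fun p hp => (hfP p hp).le) (isClosed_le f.continuous continuous_const)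
    intro q hq
    apply this
    rwa [closure_pi_set, funext fun _ => closure_Ioi (0 : ℝ), pi_univ_Ici]
  set c : Ω → ℝ := fun ω => -f (Pi.single ω 1)
  have hfc : ∀ v, f v = -(c ⬝ᵥ v) := fun v => by
    rw [show f v = _ from f.toLinearMap.apply_eq_dotProduct v]
    simp [c, dotProduct]
  have hc : 0 ≤ c := fun ω => neg_nonneg.2 <| nonpos_of_forall_mul_le fun t ht => by
    simpa using hfQ (t • Pi.single ω 1) (smul_nonneg ht.le (Pi.single_nonneg.2 zero_le_one))
  obtain ⟨k₀, hk₀⟩ := hKne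
  have hc0 : c ≠ 0 := by
    intro hc0
    have h1 := hfP 1 fun _ _ => mem_Ioi.2 one_pos
    have h2 := hfK k₀ hk₀
    rw [hfc, hc0, zero_dotProduct] at h1 h2
    linarith
  refine ⟨_, inv_sum_smul_mem_stdSimplex hc hc0, fun k hk => ?_⟩
  have hu : 0 ≤ u := by simpa using hfQ 0 le_rfl
  rw [smul_dotProduct, smul_eq_mul]
  exact mul_nonpos_of_nonneg_of_nonpos (inv_nonneg.2 (Finset.sum_nonneg fun ω _ => hc ω))
    (by linarith [hfc k, hfK k hk])

theorem exists_mem_stdSimplex_dotProduct_le_iff {A : Set (Ω → ℝ)} {x : Ω → ℝ} (hx : x ∈ A) :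
    (∃ lam ∈ stdSimplex ℝ Ω, ∀ y ∈ A, lam ⬝ᵥ y ≤ lam ⬝ᵥ x) ↔
      ¬ ∃ y ∈ convexHull ℝ A, ∀ ω, x ω < y ω := by
  refine ⟨fun ⟨lam, hlam, hmax⟩ => not_exists_strictly_dominating_of_dotProduct_le hlam hmax,
    fun h => ?_⟩
  obtain ⟨lam, hlam, hle⟩ := exists_mem_stdSimplex_dotProduct_nonpos
    ((convex_convexHull ℝ A).translate (-x)) ⟨-x + x, x, subset_convexHull ℝ A hx, rfl⟩
    fun ⟨_, ⟨y, hy, hk⟩, hpos⟩ => h ⟨y, hy, fun ω => by simpa [← hk] using hpos ω⟩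
  refine ⟨lam, hlam, fun y hy => ?_⟩
  simpa [dotProduct_add] using hle (-x + y) ⟨y, subset_convexHull ℝ A hy, rfl⟩

theorem stmt_7_general {Ω : Type} [Fintype Ω]
    (A : Finset (Ω → ℝ)) (x : Ω → ℝ) (hx : x ∈ A) :
    (∃ lam : Ω → ℝ, (∀ ω, 0 ≤ lam ω) ∧ (∑ ω, lam ω) = 1 ∧
      ∀ y ∈ A, (∑ ω, lam ω * y ω) ≤ ∑ ω, lam ω * x ω) ↔
    ¬ ∃ y ∈ convexHull ℝ (A : Set (Ω → ℝ)), ∀ ω, x ω < y ω := by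
  simpa only [stdSimplex, Set.mem_ofPred_eq, and_assoc, dotProduct, Finset.mem_coe] using
    exists_mem_stdSimplex_dotProduct_le_iff (Finset.mem_coe.2 hx)

/-- Wald–Pearce Lemma: a strategy in a finite set is a best response to some
probability measure iff it is not strictly pointwise dominated by a convex
combination of available strategies. -/
theorem stmt_7 {Ω : Type} [Fintype Ω] [Nonempty Ω]
    (A : Finset (Ω → ℝ)) (x : Ω → ℝ) (hx : x ∈ A) :
    (∃ lam : Ω → ℝ, (∀ ω, 0 ≤ lam ω) ∧ (∑ ω, lam ω) = 1 ∧
      ∀ y ∈ A, (∑ ω, lam ω * y ω) ≤ ∑ ω, lam ω * x ω) ↔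
    ¬ ∃ y ∈ convexHull ℝ (A : Set (Ω → ℝ)), ∀ ω, x ω < y ω :=
  stmt_7_general A x hx
end

section
/- Closure of unions of understood sub-theories: let 𝒯 be a theory (set of formulas closed under entailment, not containing ⊥) and π: L → [0,1] monotone with respect to logical entailment. Define an π-understood sub-theory as S ⊆ 𝒯 such that for all φ, ψ: if ψ is derivable from φ together with S, then π(φ) ≤ π(ψ). Then the union of all π-understood sub-theories of 𝒯 is itself an π-understood sub-theory; consequently there is a unique maximal π-understood sub-theory of 𝒯. -/
/-- ψ is derivable from φ together with the set S. -/
def DerivFrom {α : Type} (S : Set (Form α)) (φ ψ : Form α) : Prop :=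
  ∃ l : List (Form α), (∀ η ∈ l, η ∈ S) ∧ Entails (l.foldr Form.conj φ) ψ

/-- S is a π-understood sub-theory of T. -/
def Understood {α : Type} (π : Form α → ℝ) (T S : Set (Form α)) : Prop :=
  S ⊆ T ∧ ∀ φ ψ, DerivFrom S φ ψ → π φ ≤ π ψ

/- Let ψ be derivable from φ and η₁, …, ηₙ ∈ ⋃ 𝒮, i.e. η₁ ∧ … ∧ ηₙ ∧ φ ⟹ ψ. Each ηᵢ lies in some
understood Sᵢ, and ηᵢ ∧ χ is derivable from χ and Sᵢ, so π(χ) ≤ π(ηᵢ ∧ χ) for every χ. Adding the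
conjuncts to φ one at a time therefore never lowers π, and monotonicity of π handles the final entailment. -/

theorem Understood.le_conj {α : Type} {π : Form α → ℝ} {T S : Set (Form α)}
    (hS : Understood π T S) {η : Form α} (hη : η ∈ S) (χ : Form α) :
    π χ ≤ π (.conj η χ) :=
  hS.2 χ _ ⟨[η], by simpa using hη, fun _ h => h⟩

theorem le_foldr_conj {α : Type} {π : Form α → ℝ} {l : List (Form α)}
    (hl : ∀ η ∈ l, ∀ χ, π χ ≤ π (.conj η χ)) (φ : Form α) :
    π φ ≤ π (l.foldr Form.conj φ) := by
  induction l with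
  | nil => exact le_rfl
  | cons η l ih =>
    exact (ih fun η' hη' => hl η' (List.mem_cons_of_mem η hη')).trans
      (hl η List.mem_cons_self _)

theorem Understood.sUnion {α : Type} {π : Form α → ℝ} {T : Set (Form α)} {𝒮 : Set (Set (Form α))}
    (hmono : ∀ φ ψ, Entails φ ψ → π φ ≤ π ψ) (h𝒮 : ∀ S ∈ 𝒮, Understood π T S) :
    Understood π T (⋃₀ 𝒮) := by
  refine ⟨Set.sUnion_subset fun S hS => (h𝒮 S hS).1, ?_⟩
  rintro φ ψ ⟨l, hl, hent⟩
  have hconj : ∀ η ∈ l, ∀ χ, π χ ≤ π (.conj η χ) := fun η hη => by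
    obtain ⟨S, hS, hηS⟩ := hl η hη
    exact (h𝒮 S hS).le_conj hηS
  exact (le_foldr_conj hconj φ).trans (hmono _ _ hent)

theorem stmt_15_general {α : Type} (T : Set (Form α)) (π : Form α → ℝ)
    (hmono : ∀ φ ψ, Entails φ ψ → π φ ≤ π ψ) :
    Understood π T (⋃₀ {S | Understood π T S}) ∧
      ∀ S, Understood π T S → S ⊆ ⋃₀ {S | Understood π T S} :=
  ⟨Understood.sUnion hmono fun _ hS => hS, fun _ hS => Set.subset_sUnion_of_mem hS⟩

/-- The union of all π-understood sub-theories of a theory T is itself a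
π-understood sub-theory, hence there is a unique maximal one. -/
theorem stmt_15 {α : Type} (T : Set (Form α)) (π : Form α → ℝ)
    (hTfls : Form.fls ∉ T)
    (hTclosed : ∀ φ ∈ T, ∀ ψ, Entails φ ψ → ψ ∈ T)
    (hmono : ∀ φ ψ, Entails φ ψ → π φ ≤ π ψ) :
    Understood π T (⋃₀ {S | Understood π T S}) ∧
      ∀ S, Understood π T S → S ⊆ ⋃₀ {S | Understood π T S} :=
  stmt_15_general T π hmono
end

section
/- Characterization of the maximal understood sub-theory under ∧-distributivity: suppose π(φ) = λ(t(φ)) where λ is a finitely additive probability on a field of sets and t is an exact, ∧-distributive truth valuation. Let 𝒯 be a theory and S the maximal sub-theory of 𝒯 such that derivability of ψ from φ together with S implies π(φ) ≤ π(ψ). Then S = {φ ∈ 𝒯 : π(φ) = 1}. -/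
structure FinitelyAdditiveOn {Ω : Type} (C : Set (Set Ω)) (lam : Set Ω → ℝ) : Prop where
  compl_mem : ∀ A ∈ C, Aᶜ ∈ C
  union_mem : ∀ A ∈ C, ∀ B ∈ C, A ∪ B ∈ C
  nonneg : ∀ A ∈ C, 0 ≤ lam A
  map_union : ∀ A ∈ C, ∀ B ∈ C, A ∩ B = ∅ → lam (A ∪ B) = lam A + lam B

namespace FinitelyAdditiveOn

variable {Ω : Type} {C : Set (Set Ω)} {lam : Set Ω → ℝ} {A B : Set Ω}

theorem inter_mem (h : FinitelyAdditiveOn C lam) (hA : A ∈ C) (hB : B ∈ C) : A ∩ B ∈ C := by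
  simpa [Set.compl_union] using
    h.compl_mem _ (h.union_mem _ (h.compl_mem _ hA) _ (h.compl_mem _ hB))

theorem mono (h : FinitelyAdditiveOn C lam) (hA : A ∈ C) (hB : B ∈ C) (hAB : A ⊆ B) :
    lam A ≤ lam B := by
  have hBA : B \ A ∈ C := h.inter_mem hB (h.compl_mem _ hA)
  have hsplit := h.map_union A hA _ hBA (Set.inter_sdiff_self A B)
  rw [Set.union_sdiff_cancel hAB] at hsplit
  linarith [h.nonneg _ hBA]

theorem map_inter_of_map_eq_univ (h : FinitelyAdditiveOn C lam) (hA : A ∈ C) (hB : B ∈ C)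
    (hB_full : lam B = lam Set.univ) : lam (A ∩ B) = lam A := by
  have hBc : Bᶜ ∈ C := h.compl_mem B hB
  have hBc_null : lam Bᶜ = 0 := by
    have := h.map_union B hB _ hBc (Set.inter_compl_self B)
    rw [Set.union_compl_self] at this
    linarith
  have hABc : A ∩ Bᶜ ∈ C := h.inter_mem hA hBc
  have hABc_null : lam (A ∩ Bᶜ) = 0 :=
    le_antisymm (hBc_null ▸ h.mono hABc hBc Set.inter_subset_right) (h.nonneg _ hABc)
  have hsplit := h.map_union _ (h.inter_mem hA hB) _ hABc
    (by rw [Set.inter_inter_inter_comm, Set.inter_compl_self, Set.inter_empty])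
  rw [Set.inter_union_compl] at hsplit
  linarith

end FinitelyAdditiveOn

section Valuation

variable {α Ω : Type} {t : Form α → Set Ω}

theorem subset_of_entails (hexact : ∀ φ ψ, FEquiv φ ψ → t φ = t ψ)
    (hand : ∀ φ ψ, t (.conj φ ψ) = t φ ∩ t ψ) {φ ψ : Form α} (h : Entails φ ψ) :
    t φ ⊆ t ψ := by
  rw [hexact φ (.conj φ ψ) ⟨fun v hv => ⟨hv, h v hv⟩, fun _ hv => hv.1⟩, hand]
  exact Set.inter_subset_right

theorem map_foldr_conj_of_map_eq_univ {C : Set (Set Ω)} {lam : Set Ω → ℝ}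
    (hlam : FinitelyAdditiveOn C lam) (htC : ∀ φ, t φ ∈ C)
    (hand : ∀ φ ψ, t (.conj φ ψ) = t φ ∩ t ψ) (φ : Form α) {l : List (Form α)}
    (hl : ∀ η ∈ l, lam (t η) = lam Set.univ) :
    lam (t (l.foldr Form.conj φ)) = lam (t φ) := by
  induction l with
  | nil => rfl
  | cons η l ih =>
    rw [List.foldr_cons, hand, Set.inter_comm,
      hlam.map_inter_of_map_eq_univ (htC _) (htC η) (hl η List.mem_cons_self),
      ih fun η' hη' => hl η' (List.mem_cons_of_mem η hη')]

theorem understood_setOf_map_eq_univ {C : Set (Set Ω)} {lam : Set Ω → ℝ}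
    (hlam : FinitelyAdditiveOn C lam) (htC : ∀ φ, t φ ∈ C)
    (hexact : ∀ φ ψ, FEquiv φ ψ → t φ = t ψ) (hand : ∀ φ ψ, t (.conj φ ψ) = t φ ∩ t ψ)
    (T : Set (Form α)) :
    Understood (fun φ => lam (t φ)) T {φ ∈ T | lam (t φ) = lam Set.univ} := by
  refine ⟨fun φ hφ => hφ.1, ?_⟩
  rintro φ ψ ⟨l, hl, hent⟩
  calc lam (t φ) = lam (t (l.foldr Form.conj φ)) :=
        (map_foldr_conj_of_map_eq_univ hlam htC hand φ fun η hη => (hl η hη).2).symm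
    _ ≤ lam (t ψ) := hlam.mono (htC _) (htC _) (subset_of_entails hexact hand hent)

end Valuation

theorem Understood.eq_of_mem {α : Type} {π : Form α → ℝ} {T S : Set (Form α)}
    (hS : Understood π T S) {φ : Form α} (hφ : φ ∈ S) : π φ = π .tru :=
  le_antisymm (hS.2 φ .tru ⟨[], by simp, fun _ _ => trivial⟩)
    (hS.2 .tru φ ⟨[φ], by simpa using hφ, fun _ hv => hv.1⟩)

theorem stmt_16_general {α Ω : Type} (T : Set (Form α)) (π : Form α → ℝ)
    (C : Set (Set Ω))
    (hcompl : ∀ A ∈ C, Aᶜ ∈ C)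
    (hunion : ∀ A ∈ C, ∀ B ∈ C, A ∪ B ∈ C)
    (t : Form α → Set Ω)
    (htru : t .tru = Set.univ)
    (htC : ∀ φ, t φ ∈ C)
    (hexact : ∀ φ ψ, FEquiv φ ψ → t φ = t ψ)
    (hand : ∀ φ ψ, t (.conj φ ψ) = t φ ∩ t ψ)
    (lam : Set Ω → ℝ)
    (h1 : lam Set.univ = 1)
    (hrange : ∀ A ∈ C, lam A ∈ Set.Icc (0:ℝ) 1)
    (hadd : ∀ A ∈ C, ∀ B ∈ C, A ∩ B = ∅ → lam (A ∪ B) = lam A + lam B)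
    (hrep : ∀ φ, lam (t φ) = π φ) :
    ⋃₀ {S | Understood π T S} = {φ ∈ T | π φ = 1} := by
  obtain rfl : π = fun φ => lam (t φ) := funext fun φ => (hrep φ).symm
  have hlam : FinitelyAdditiveOn C lam := ⟨hcompl, hunion, fun A hA => (hrange A hA).1, hadd⟩
  apply Set.Subset.antisymm
  · rintro φ ⟨S, hS, hφ⟩
    exact ⟨hS.1 hφ, (hS.eq_of_mem hφ).trans (by simp only [htru, h1])⟩
  · intro φ hφ
    refine ⟨_, understood_setOf_map_eq_univ hlam htC hexact hand T, ?_⟩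
    rwa [h1]

/-- Under an exact, ∧-distributive representation with a finitely additive
probability, the maximal understood sub-theory of T consists exactly of the
statements of T assigned probability 1. -/
theorem stmt_16 {α Ω : Type} (T : Set (Form α)) (π : Form α → ℝ)
    (hTfls : Form.fls ∉ T)
    (hTclosed : ∀ φ ∈ T, ∀ ψ, Entails φ ψ → ψ ∈ T)
    (C : Set (Set Ω))
    (hempty : ∅ ∈ C) (hcompl : ∀ A ∈ C, Aᶜ ∈ C)
    (hunion : ∀ A ∈ C, ∀ B ∈ C, A ∪ B ∈ C)
    (t : Form α → Set Ω)
    (htru : t .tru = Set.univ) (hfls : t .fls = ∅)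
    (htC : ∀ φ, t φ ∈ C)
    (hexact : ∀ φ ψ, FEquiv φ ψ → t φ = t ψ)
    (hand : ∀ φ ψ, t (.conj φ ψ) = t φ ∩ t ψ)
    (lam : Set Ω → ℝ)
    (h0 : lam ∅ = 0) (h1 : lam Set.univ = 1)
    (hrange : ∀ A ∈ C, lam A ∈ Set.Icc (0:ℝ) 1)
    (hadd : ∀ A ∈ C, ∀ B ∈ C, A ∩ B = ∅ → lam (A ∪ B) = lam A + lam B)
    (hrep : ∀ φ, lam (t φ) = π φ) :
    ⋃₀ {S | Understood π T S} = {φ ∈ T | π φ = 1} :=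
  stmt_16_general T π C hcompl hunion t htru htC hexact hand lam h1 hrange hadd hrep
end

section
/- For a totally monotone capacity λ' on the power set of a finite set Ω', there exists a finite set Ω (the nonempty subsets of Ω') and a (finitely additive) probability measure λ on Ω such that for every B ⊆ Ω', λ'(B) = λ({A ∈ Ω : A ⊆ B}). (Möbius / Dempster–Shafer representation of belief functions.) -/
/-!
The mass function is the Möbius transform `m A = ∑_{C ⊆ A} (-1)^|A \ C| λ'(C)`, which inverts
summation over subsets because `∑_{C ⊆ D ⊆ B} (-1)^|D \ C|` vanishes unless `C = B`.
For `|A| ≥ 2`, total monotonicity applied to the cover of `A` by the sets `A \ {a}`, `a ∈ A`,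
gives `m A ≥ 0`: the intersections of these sets are the sets `A \ D` with `D ⊆ A` nonempty, so
the inclusion–exclusion sum is exactly `λ'(A) - m A`. For a singleton, `m {a} = λ'{a} - λ'(∅)`
is nonnegative by monotonicity.
-/

open Finset

variable {α : Type*} [DecidableEq α]

theorem Finset.sum_powerset_sdiff {M : Type*} [AddCommMonoid M] (s : Finset α)
    (g : Finset α → M) : ∑ t ∈ s.powerset, g (s \ t) = ∑ t ∈ s.powerset, g t :=
  sum_nbij' (s \ ·) (s \ ·) (by simp) (by simp)
    (fun t ht => sdiff_sdiff_eq_self (mem_powerset.1 ht))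
    (fun t ht => sdiff_sdiff_eq_self (mem_powerset.1 ht)) (fun _ _ => rfl)

theorem Finset.sum_Icc_neg_one_pow_card_sdiff {R : Type*} [CommRing R] {s t : Finset α}
    (hst : s ⊆ t) : ∑ u ∈ Icc s t, (-1 : R) ^ (u \ s).card = if s = t then 1 else 0 := by
  have hcancel : ∀ u ∈ (t \ s).powerset, (s ∪ u) \ s = u := fun u hu =>
    union_sdiff_cancel_left (disjoint_of_subset_right (mem_powerset.1 hu) disjoint_sdiff)
  have hinj : Set.InjOn (s ∪ ·) (t \ s).powerset := fun u hu v hv huv =>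
    hcancel u hu ▸ hcancel v hv ▸ congrArg (· \ s) huv
  have hsum : ∑ u ∈ (t \ s).powerset, (-1 : R) ^ u.card = if t \ s = ∅ then 1 else 0 := by
    exact_mod_cast congrArg (Int.cast : ℤ → R) sum_powerset_neg_one_pow_card
  rw [Icc_eq_image_powerset hst, sum_image hinj, sum_congr rfl fun u hu => by rw [hcancel u hu],
    hsum]
  exact if_congr (sdiff_eq_empty_iff_subset.trans ⟨subset_antisymm hst, fun h => h ▸ subset_rfl⟩)
    rfl rfl

theorem Finset.sup_erase_self {s : Finset α} (hs : s.Nontrivial) : s.sup s.erase = s := by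
  ext a
  simp only [mem_sup, mem_erase]
  exact ⟨fun ⟨_, _, _, ha⟩ => ha, fun ha => (hs.exists_ne a).imp fun b hb => ⟨hb.1, hb.2.symm, ha⟩⟩

theorem Finset.exists_fin_injective_image_eq (s : Finset α) :
    ∃ (n : ℕ) (e : Fin n → α), Function.Injective e ∧ univ.image e = s :=
  ⟨s.card, fun i => s.equivFin.symm i, Subtype.val_injective.comp s.equivFin.symm.injective, by
    ext a
    simpa using ⟨fun ⟨i, hi⟩ => hi ▸ (s.equivFin.symm i).2,
      fun ha => ⟨s.equivFin ⟨a, ha⟩, by simp⟩⟩⟩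

theorem Finset.inf_erase_eq_sdiff_image [Fintype α] {ι : Type*} {I : Finset ι} (hI : I.Nonempty)
    (s : Finset α) (e : ι → α) : I.inf (fun i => s.erase (e i)) = s \ I.image e := by
  ext a
  rw [← inf'_eq_inf hI, mem_inf']
  simp only [mem_erase, mem_sdiff, mem_image, not_exists, not_and]
  exact ⟨fun h => ⟨(h _ hI.choose_spec).2, fun i hi hia => (h i hi).1 hia.symm⟩,
    fun h i hi => ⟨fun hai => h.2 i hi hai.symm, h.1⟩⟩

section Mobius

variable {R : Type*} [CommRing R]

def mobiusTransform (f : Finset α → R) (s : Finset α) : R :=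
  ∑ t ∈ s.powerset, (-1) ^ (s \ t).card * f t

variable (f : Finset α → R)

theorem sum_powerset_mobiusTransform (s : Finset α) :
    ∑ t ∈ s.powerset, mobiusTransform f t = f s := by
  unfold mobiusTransform
  rw [sum_comm' (t' := s.powerset) (s' := fun u => Icc u s) (h := fun t u => by
    simp only [mem_powerset, mem_Icc]
    exact ⟨fun h => ⟨⟨h.2, h.1⟩, h.2.trans h.1⟩, fun h => ⟨h.1.2, h.1.1⟩⟩)]
  simp_rw [← sum_mul]
  rw [sum_congr rfl fun u hu => by rw [sum_Icc_neg_one_pow_card_sdiff (mem_powerset.1 hu)]]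
  simp [ite_mul]

@[simp]
theorem mobiusTransform_empty : mobiusTransform f ∅ = f ∅ := by
  simp [mobiusTransform]

theorem mobiusTransform_singleton (a : α) : mobiusTransform f {a} = f {a} - f ∅ := by
  rw [mobiusTransform, ← insert_empty, sum_powerset_insert (notMem_empty a)]
  simp [sub_eq_neg_add]

theorem sub_mobiusTransform (s : Finset α) :
    f s - mobiusTransform f s = ∑ t ∈ s.powerset.erase ∅, (-1) ^ (t.card + 1) * f (s \ t) := by
  rw [mobiusTransform, ← sum_powerset_sdiff, ← add_sum_erase _ _ (empty_mem_powerset s)]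
  rw [sdiff_empty, Finset.sdiff_self, card_empty, pow_zero, one_mul, sub_add_cancel_left,
    ← sum_neg_distrib]
  refine sum_congr rfl fun t ht => ?_
  rw [Finset.sdiff_sdiff_eq_self (mem_powerset.1 (mem_of_mem_erase ht)), pow_succ]
  ring

variable [Fintype α]

theorem sum_inf_erase_eq_sub_mobiusTransform {ι : Type*} [Fintype ι] [DecidableEq ι]
    {e : ι → α} (he : Function.Injective e) :
    ∑ I ∈ univ.powerset.erase ∅,
        (-1) ^ (I.card + 1) * f (I.inf fun i => (univ.image e).erase (e i)) =
      f (univ.image e) - mobiusTransform f (univ.image e) := by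
  rw [sub_mobiusTransform, powerset_image, ← image_empty e, ← image_erase (image_injective he),
    sum_image (image_injective he).injOn]
  refine sum_congr rfl fun I hI => ?_
  rw [inf_erase_eq_sdiff_image (nonempty_iff_ne_empty.2 (ne_of_mem_erase hI)),
    card_image_of_injective _ he]

variable [PartialOrder R]

def IsTotallyMonotone (f : Finset α → R) : Prop :=
  ∀ (n : ℕ) (B : Fin n → Finset α),
    ∑ I ∈ univ.powerset.erase (∅ : Finset (Fin n)), (-1 : R) ^ (I.card + 1) * f (I.inf B) ≤
      f (univ.sup B)

variable {f}

theorem IsTotallyMonotone.mobiusTransform_nonneg [IsOrderedAddMonoid R]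
    (htm : IsTotallyMonotone f) (hmono : Monotone f) {s : Finset α} (hs : s.Nonempty) :
    0 ≤ mobiusTransform f s := by
  obtain ⟨a, rfl⟩ | hs := hs.exists_eq_singleton_or_nontrivial
  · rw [mobiusTransform_singleton, sub_nonneg]
    exact hmono (empty_subset _)
  obtain ⟨n, e, he, rfl⟩ := s.exists_fin_injective_image_eq
  have hsup : univ.sup (fun i => (univ.image e).erase (e i)) = univ.image e :=
    (sup_image univ e _).symm.trans (sup_erase_self hs)
  have := htm n fun i => (univ.image e).erase (e i)
  rwa [hsup, sum_inf_erase_eq_sub_mobiusTransform f he, sub_le_self_iff] at this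

end Mobius

theorem stmt_18_general {Ω' : Type} [Fintype Ω'] [DecidableEq Ω']
    (lam' : Finset Ω' → ℝ)
    (h0 : lam' ∅ = 0) (h1 : lam' Finset.univ = 1)
    (hmono : ∀ A B : Finset Ω', A ⊆ B → lam' A ≤ lam' B)
    (htm : ∀ (n : ℕ) (B : Fin n → Finset Ω'),
      lam' (Finset.univ.sup B) ≥
        ∑ I ∈ (Finset.univ.powerset.erase (∅ : Finset (Fin n))),
          (-1 : ℝ) ^ (I.card + 1) * lam' (I.inf B)) :
    ∃ m : Finset Ω' → ℝ,
      (∀ A, 0 ≤ m A) ∧ m ∅ = 0 ∧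
      (∑ A ∈ Finset.univ.powerset, m A) = 1 ∧
      ∀ B : Finset Ω', lam' B = ∑ A ∈ B.powerset, m A := by
  have hm₀ : mobiusTransform lam' ∅ = 0 := by rw [mobiusTransform_empty, h0]
  refine ⟨mobiusTransform lam', fun A => ?_, hm₀, by rw [sum_powerset_mobiusTransform, h1],
    fun B => (sum_powerset_mobiusTransform lam' B).symm⟩
  obtain rfl | hA := A.eq_empty_or_nonempty
  · exact hm₀.ge
  · exact IsTotallyMonotone.mobiusTransform_nonneg htm hmono hA

/-- Möbius / Dempster–Shafer representation: a totally monotone capacity on a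
finite set is the distribution over nonempty subsets of a probability mass
function. -/
theorem stmt_18 {Ω' : Type} [Fintype Ω'] [DecidableEq Ω'] [Nonempty Ω']
    (lam' : Finset Ω' → ℝ)
    (h0 : lam' ∅ = 0) (h1 : lam' Finset.univ = 1)
    (hmono : ∀ A B : Finset Ω', A ⊆ B → lam' A ≤ lam' B)
    (htm : ∀ (n : ℕ) (B : Fin n → Finset Ω'),
      lam' (Finset.univ.sup B) ≥
        ∑ I ∈ (Finset.univ.powerset.erase (∅ : Finset (Fin n))),
          (-1 : ℝ) ^ (I.card + 1) * lam' (I.inf B)) :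
    ∃ m : Finset Ω' → ℝ,
      (∀ A, 0 ≤ m A) ∧ m ∅ = 0 ∧
      (∑ A ∈ Finset.univ.powerset, m A) = 1 ∧
      ∀ B : Finset Ω', lam' B = ∑ A ∈ B.powerset, m A :=
  stmt_18_general lam' h0 h1 hmono htm
end

section
/- The Choquet-type integral ∫ x dλ = ∫₀^∞ λ({ω : x(ω) ≥ r}) dr, for nonnegative measurable functions x on a finite set Ω and a likelihood appraisal λ on 2^Ω, is additive over comonotone pairs when λ is a monotone capacity: if x and y are comonotone (there are no ω, ω' with x(ω) > x(ω') and y(ω) < y(ω')), then ∫ (x+y) dλ = ∫ x dλ + ∫ y dλ. -/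
/-!
Enumerate `Ω` as `e : Fin n ≃ Ω` so that `x + y` decreases along `e`; comonotonicity forces `x`
and `y` to decrease along `e` too. For any `f ≥ 0` decreasing along `e`, each superlevel set
`{r ≤ f}` is an initial segment `A N = enumPrefix e N` of the enumeration, so telescoping gives
`∫ f dλ = ∑ₖ f (e k) * (λ (A (k+1)) - λ (A k))`: the weights depend on `e` alone, and the
integral is additive on functions decreasing along the same `e`.
-/

open MeasureTheory

/-- The Choquet integral of a nonnegative function with respect to a
likelihood appraisal, via the decreasing-distribution formula. -/
noncomputable def choquet {Ω : Type} (lam : Set Ω → ℝ) (x : Ω → ℝ) : ℝ :=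
  ∫ r in Set.Ioi (0 : ℝ), lam {ω | r ≤ x ω}

open Finset

theorem Antitone.exists_le_iff_lt {α : Type*} [Preorder α] {n : ℕ} {g : Fin n → α}
    (hg : Antitone g) (r : α) :
    ∃ N ≤ n, ∀ k : Fin n, r ≤ g k ↔ (k : ℕ) < N := by
  classical
  set S : Finset (Fin n) := {k | r ≤ g k}
  refine ⟨#S, (card_le_univ S).trans_eq (Fintype.card_fin n), fun k => ⟨fun hk => ?_, fun hk => ?_⟩⟩
  · have : Finset.Iic k ⊆ S := fun j hj => by
      simpa [S] using hk.trans (hg (Finset.mem_Iic.mp hj))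
    simpa using (Finset.card_le_card this)
  · by_contra hk'
    have : S ⊆ Finset.Iio k := fun j hj => by
      simp only [S, Finset.mem_filter, Finset.mem_univ, true_and] at hj
      exact Finset.mem_Iio.mpr (lt_of_not_ge fun hkj => hk' (hj.trans (hg hkj)))
    simpa using (Finset.card_le_card this).trans_lt' hk

theorem Fin.sum_ite_lt_sub {M : Type*} [AddCommGroup M] (a : ℕ → M) {N n : ℕ} (hN : N ≤ n) :
    ∑ k : Fin n, (if (k : ℕ) < N then a (k + 1) - a k else 0) = a N - a 0 := by
  rw [Fin.sum_univ_eq_sum_range (fun k => if k < N then a (k + 1) - a k else 0), ← sum_filter,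
    show (range n).filter (· < N) = range N by ext; simp; omega, sum_range_sub]

theorem integrableOn_Ioi_indicator_Iic {E : Type*} [NormedAddCommGroup E] (c : E) (a : ℝ) :
    IntegrableOn ((Set.Iic a).indicator fun _ => c) (Set.Ioi 0) := by
  rw [IntegrableOn, integrable_indicator_iff measurableSet_Iic, IntegrableOn,
    Measure.restrict_restrict measurableSet_Iic, Set.Iic_inter_Ioi]
  exact integrableOn_const (by simp)

theorem setIntegral_Ioi_indicator_Iic {E : Type*} [NormedAddCommGroup E] [NormedSpace ℝ E]
    [CompleteSpace E] (c : E) {a : ℝ} (ha : 0 ≤ a) :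
    ∫ r in Set.Ioi 0, (Set.Iic a).indicator (fun _ => c) r = a • c := by
  rw [integral_indicator_const c measurableSet_Iic, measureReal_restrict_apply measurableSet_Iic,
    Set.Iic_inter_Ioi, Real.volume_real_Ioc_of_le ha, sub_zero]

theorem exists_equiv_fin_antitone {Ω α : Type*} [Fintype Ω] [LinearOrder α] (f : Ω → α) :
    ∃ e : Fin (Fintype.card Ω) ≃ Ω, Antitone (f ∘ e) := by
  let e₀ := (Fintype.equivFin Ω).symm
  exact ⟨(Tuple.sort (OrderDual.toDual ∘ f ∘ e₀)).trans e₀,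
    (Tuple.monotone_sort (OrderDual.toDual ∘ f ∘ e₀)).dual_right⟩

theorem Antitone.of_add_of_comonotone {ι α : Type*} [Preorder ι] [AddCommMonoid α] [LinearOrder α]
    [IsOrderedCancelAddMonoid α] {g h : ι → α} (hcomon : ∀ i j, ¬ (g j < g i ∧ h i < h j))
    (hgh : Antitone (g + h)) : Antitone g := by
  intro i j hij
  by_contra! hlt
  have hh : h i ≤ h j := le_of_not_gt fun h' => hcomon j i ⟨hlt, h'⟩
  exact (hgh hij).not_gt (add_lt_add_of_lt_of_le hlt hh)

def enumPrefix {Ω : Type*} {n : ℕ} (e : Fin n ≃ Ω) (k : ℕ) : Set Ω :=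
  {ω | (e.symm ω : ℕ) < k}

theorem setOf_le_eq_sum_indicator {Ω : Type*} {n : ℕ} (lam : Set Ω → ℝ) (h0 : lam ∅ = 0)
    (e : Fin n ≃ Ω) {f : Ω → ℝ} (hf : Antitone (f ∘ e)) (r : ℝ) :
    lam {ω | r ≤ f ω} = ∑ k : Fin n, (Set.Iic (f (e k))).indicator
      (fun _ => lam (enumPrefix e (k + 1)) - lam (enumPrefix e k)) r := by
  obtain ⟨N, hN, hiff⟩ := hf.exists_le_iff_lt r
  have hlevel : {ω | r ≤ f ω} = enumPrefix e N := by
    ext ω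
    simpa [enumPrefix] using hiff (e.symm ω)
  have hempty : enumPrefix e 0 = ∅ := by
    ext
    simp [enumPrefix]
  calc lam {ω | r ≤ f ω} = lam (enumPrefix e N) - lam (enumPrefix e 0) := by
        rw [hlevel, hempty, h0, sub_zero]
    _ = _ := (Fin.sum_ite_lt_sub (fun k => lam (enumPrefix e k)) hN).symm
    _ = _ := sum_congr rfl fun k _ => by
        simp only [Set.indicator_apply, Set.mem_Iic, Function.comp_apply, ← hiff k]

theorem choquet_eq_sum_of_antitone {Ω : Type} {n : ℕ} (lam : Set Ω → ℝ) (h0 : lam ∅ = 0)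
    (e : Fin n ≃ Ω) {f : Ω → ℝ} (hf0 : ∀ ω, 0 ≤ f ω) (hf : Antitone (f ∘ e)) :
    choquet lam f = ∑ k : Fin n, f (e k) * (lam (enumPrefix e (k + 1)) - lam (enumPrefix e k)) := by
  simp_rw [choquet, setOf_le_eq_sum_indicator lam h0 e hf]
  rw [integral_finsetSum _ fun k _ => integrableOn_Ioi_indicator_Iic _ _]
  exact sum_congr rfl fun k _ => setIntegral_Ioi_indicator_Iic _ (hf0 (e k))

theorem stmt_19_general {Ω : Type} [Fintype Ω]
    (lam : Set Ω → ℝ)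
    (h0 : lam ∅ = 0)
    (x y : Ω → ℝ) (hx : ∀ ω, 0 ≤ x ω) (hy : ∀ ω, 0 ≤ y ω)
    (hcomon : ∀ ω ω', ¬ (x ω' < x ω ∧ y ω < y ω')) :
    choquet lam (fun ω => x ω + y ω) = choquet lam x + choquet lam y := by
  obtain ⟨e, he⟩ := exists_equiv_fin_antitone fun ω => x ω + y ω
  have hxe : Antitone (x ∘ e) :=
    he.of_add_of_comonotone fun i j => hcomon (e i) (e j)
  have hye : Antitone (y ∘ e) :=
    Antitone.of_add_of_comonotone (h := x ∘ e) (fun i j h => hcomon (e j) (e i) h.symm)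
      (by rw [add_comm]; exact he)
  rw [choquet_eq_sum_of_antitone lam h0 e (fun ω => add_nonneg (hx ω) (hy ω)) he,
    choquet_eq_sum_of_antitone lam h0 e hx hxe, choquet_eq_sum_of_antitone lam h0 e hy hye,
    ← sum_add_distrib]
  exact sum_congr rfl fun k _ => add_mul _ _ _

/-- Comonotone additivity of the Choquet integral for a monotone capacity on a
finite set. -/
theorem stmt_19 {Ω : Type} [Fintype Ω] [Nonempty Ω]
    (lam : Set Ω → ℝ)
    (h0 : lam ∅ = 0) (h1 : lam Set.univ = 1)
    (hmono : ∀ A B : Set Ω, A ⊆ B → lam A ≤ lam B)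
    (x y : Ω → ℝ) (hx : ∀ ω, 0 ≤ x ω) (hy : ∀ ω, 0 ≤ y ω)
    (hcomon : ∀ ω ω', ¬ (x ω' < x ω ∧ y ω < y ω')) :
    choquet lam (fun ω => x ω + y ω) = choquet lam x + choquet lam y :=
  stmt_19_general lam h0 x y hx hy hcomon
end
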